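/- arXiv:1602.01545 — 3 statements merged into one kernel-verified Lean document; each statement's English description precedes it below -/
import Mathlib

section
/- If the DS code C_DS^⊥ has minimum distance d, then for every i with 1 ≤ i ≤ d-1, the split weight enumerators satisfy B^⊥_{i,0} = Σ_{j=0}^{m} B_{i,j}; moreover B^⊥_{i,0} ≥ Σ_{j=1}^{m} B_{i,j} for all i = d,…,n, and B_{0,0} = B^⊥_{0,0} = 1 while B_{i,0} = 0 for all i ≥ 1. -/
open Finset

noncomputable section

abbrev F2 := ZMod 2
abbrev F4 := GaloisField 2 2

/-- Trace from `F4` to `F2`. -/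
def trF : F4 →ₗ[F2] F2 := Algebra.trace F2 F4

/-- Hamming weight of a vector. -/
def wt {α : Type*} [Zero α] {N : ℕ} (x : Fin N → α) : ℕ := Nat.card {i // x i ≠ 0}

/-- Hermitian trace inner product on `F4^n`. -/
def ipD {n : ℕ} (x y : Fin n → F4) : F2 := trF (∑ i, x i * (y i) ^ 2)

/-- Mixed inner product on `F4^n × F2^m`. -/
def ipDS {n m : ℕ} (x y : (Fin n → F4) × (Fin m → F2)) : F2 :=
  ipD x.1 y.1 + ∑ j, x.2 j * y.2 j

/-- The F2-row space of `H` inside `F4^n`. -/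
def rowSpanF2 {n m : ℕ} (H : Fin m → Fin n → F4) : Set (Fin n → F4) :=
  {v | ∃ u : Fin m → F2, v = fun i => ∑ r, algebraMap F2 F4 (u r) * H r i}

/-- The data-syndrome code generated by the rows of `[H | I_m]`. -/
def CDS {n m : ℕ} (H : Fin m → Fin n → F4) : Set ((Fin n → F4) × (Fin m → F2)) :=
  {w | ∃ u : Fin m → F2, w = (fun i => ∑ r, algebraMap F2 F4 (u r) * H r i, u)}

/-- Dual with respect to the mixed inner product. -/
def dualDS {n m : ℕ} (D : Set ((Fin n → F4) × (Fin m → F2))) :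
    Set ((Fin n → F4) × (Fin m → F2)) :=
  {v | ∀ w ∈ D, ipDS w v = 0}

/-- Split weight enumerator. -/
def Bwt {n m : ℕ} (D : Set ((Fin n → F4) × (Fin m → F2))) (i j : ℕ) : ℕ :=
  Nat.card {w : (Fin n → F4) × (Fin m → F2) // w ∈ D ∧ wt w.1 = i ∧ wt w.2 = j}

/-- q-ary Krawtchouk polynomial `K_t(x; N, q)` evaluated at integer `x`. -/
def kraw (t x N q : ℕ) : ℚ :=
  ∑ s ∈ Finset.range (t + 1),
    (-1 : ℚ) ^ s * ((q : ℚ) - 1) ^ (t - s) * (x.choose s) * ((N - x).choose (t - s))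

/-!
The encoding `u ↦ uH` is injective because the rows of `H` are independent, and its image `C`
is totally isotropic for the trace form, which is `F2`-bilinear. Hence `u ↦ (uH, 0)` embeds the
codewords of `C_DS` with first block of weight `i` (they are counted by `u`) into the vectors of
`C_DS^⊥` of weight `(i, 0)`. Below the minimum distance every such dual vector is harmless, i.e.
of the form `(uH, 0)`, so the embedding is then a bijection.
-/

section Weight

variable {α : Type*} [Zero α] {N : ℕ}

lemma wt_eq_zero_iff (x : Fin N → α) : wt x = 0 ↔ x = 0 := by
  simp [wt, Finite.card_eq_zero_iff, isEmpty_subtype, funext_iff]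

lemma wt_zero : wt (0 : Fin N → α) = 0 :=
  (wt_eq_zero_iff _).mpr rfl

lemma wt_le (x : Fin N → α) : wt x ≤ N :=
  (Nat.card_le_card_of_injective _ Subtype.val_injective).trans (Nat.card_fin N).le

end Weight

section InnerProduct

variable {n : ℕ}

lemma ipD_add_left (x x' y : Fin n → F4) : ipD (x + x') y = ipD x y + ipD x' y := by
  simp only [ipD, Pi.add_apply, add_mul, sum_add_distrib, map_add]

lemma ipD_smul_left (c : F2) (x y : Fin n → F4) : ipD (c • x) y = c * ipD x y := by
  simp only [ipD, Pi.smul_apply, smul_mul_assoc, ← smul_sum, map_smul, smul_eq_mul]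

lemma ipD_add_right (x y y' : Fin n → F4) : ipD x (y + y') = ipD x y + ipD x y' := by
  simp only [ipD, Pi.add_apply, add_pow_char, mul_add, sum_add_distrib, map_add]

-- Frobenius fixes `F2`, so `(c • y) ^ 2 = c • y ^ 2`: the form is `F2`-bilinear, not sesquilinear.
lemma ipD_smul_right (c : F2) (x y : Fin n → F4) : ipD x (c • y) = c * ipD x y := by
  simp only [ipD, Pi.smul_apply, smul_pow, ZMod.pow_card, mul_smul_comm, ← smul_sum, map_smul,
    smul_eq_mul]

def ipDForm (n : ℕ) : LinearMap.BilinForm F2 (Fin n → F4) :=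
  LinearMap.mk₂ F2 ipD ipD_add_left ipD_smul_left ipD_add_right ipD_smul_right

lemma ipD_linearCombination_eq_zero {m : ℕ} {H : Fin m → Fin n → F4}
    (horth : ∀ r s, ipD (H r) (H s) = 0) (u v : Fin m → F2) :
    ipD (Fintype.linearCombination F2 H u) (Fintype.linearCombination F2 H v) = 0 := by
  change ipDForm n _ _ = 0
  simp [Fintype.linearCombination_apply, map_sum, map_smul, ipDForm, horth]

end InnerProduct

section DSCode

variable {n m : ℕ} {H : Fin m → Fin n → F4}

lemma sum_algebraMap_mul_eq_linearCombination (H : Fin m → Fin n → F4) (u : Fin m → F2) :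
    (fun i => ∑ r, algebraMap F2 F4 (u r) * H r i) = Fintype.linearCombination F2 H u := by
  ext i
  simp [Fintype.linearCombination_apply, Algebra.smul_def]

lemma mem_CDS_iff {w : (Fin n → F4) × (Fin m → F2)} :
    w ∈ CDS H ↔ ∃ u, w = (Fintype.linearCombination F2 H u, u) := by
  simp only [CDS, Set.mem_ofPred_eq, sum_algebraMap_mul_eq_linearCombination]

lemma mem_rowSpanF2_iff {g : Fin n → F4} :
    g ∈ rowSpanF2 H ↔ ∃ u, g = Fintype.linearCombination F2 H u := by
  simp only [rowSpanF2, Set.mem_ofPred_eq, sum_algebraMap_mul_eq_linearCombination]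

lemma zero_mem_CDS : (0 : (Fin n → F4) × (Fin m → F2)) ∈ CDS H :=
  mem_CDS_iff.mpr ⟨0, by ext <;> simp⟩

lemma zero_mem_dualDS (D : Set ((Fin n → F4) × (Fin m → F2))) : 0 ∈ dualDS D := by
  intro w _
  simp [ipDS, ipD]

lemma linearCombination_mem_dualDS_CDS (horth : ∀ r s, ipD (H r) (H s) = 0) (v : Fin m → F2) :
    (Fintype.linearCombination F2 H v, 0) ∈ dualDS (CDS H) := by
  intro w hw
  obtain ⟨u, rfl⟩ := mem_CDS_iff.mp hw
  simp [ipDS, ipD_linearCombination_eq_zero horth]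

lemma Bwt_zero_zero {D : Set ((Fin n → F4) × (Fin m → F2))} (h0 : 0 ∈ D) : Bwt D 0 0 = 1 := by
  have hD : ∀ w, (w ∈ D ∧ wt w.1 = 0 ∧ wt w.2 = 0) ↔ w = 0 := fun w => by
    constructor
    · rintro ⟨-, h1, h2⟩
      exact Prod.ext ((wt_eq_zero_iff _).mp h1) ((wt_eq_zero_iff _).mp h2)
    · rintro rfl
      exact ⟨h0, wt_zero, wt_zero⟩
  rw [Bwt, Nat.card_congr (Equiv.subtypeEquivRight hD), Nat.card_unique]

lemma Bwt_CDS_eq_zero {i : ℕ} (hi : i ≠ 0) : Bwt (CDS H) i 0 = 0 := by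
  rw [Bwt, Nat.card_eq_zero]
  left
  refine ⟨fun ⟨w, hw, h1, h2⟩ => hi ?_⟩
  obtain ⟨u, rfl⟩ := mem_CDS_iff.mp hw
  obtain rfl : u = 0 := (wt_eq_zero_iff u).mp h2
  simpa [wt_zero] using h1.symm

lemma sum_Bwt_range (D : Set ((Fin n → F4) × (Fin m → F2))) (i : ℕ) :
    ∑ j ∈ range (m + 1), Bwt D i j = Nat.card {w // w ∈ D ∧ wt w.1 = i} := by
  classical
  have := Fintype.ofFinite F4
  simp only [Bwt, Nat.card_eq_fintype_card, Fintype.card_subtype]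
  rw [card_eq_sum_card_fiberwise (f := fun w => wt w.2) (t := range (m + 1))
    (fun w _ => mem_range.mpr (Nat.lt_succ_of_le (wt_le _)))]
  simp [filter_filter, and_assoc]

lemma card_CDS_wt_fst (i : ℕ) :
    Nat.card {w // w ∈ CDS H ∧ wt w.1 = i} =
      Nat.card {u // wt (Fintype.linearCombination F2 H u) = i} := by
  refine (Nat.card_eq_of_bijective (fun u => ⟨(_, u.1), mem_CDS_iff.mpr ⟨u, rfl⟩, u.2⟩)
    ⟨fun _ _ huv => Subtype.ext (congrArg (·.1.2) huv), ?_⟩).symm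
  rintro ⟨w, hw, hi⟩
  obtain ⟨u, rfl⟩ := mem_CDS_iff.mp hw
  exact ⟨⟨u, hi⟩, rfl⟩

def toDualZero (horth : ∀ r s, ipD (H r) (H s) = 0) (i : ℕ) :
    {u // wt (Fintype.linearCombination F2 H u) = i} →
      {w // w ∈ dualDS (CDS H) ∧ wt w.1 = i ∧ wt w.2 = 0} :=
  fun u => ⟨(_, 0), linearCombination_mem_dualDS_CDS horth u.1, u.2, wt_zero⟩

lemma toDualZero_injective (hind : LinearIndependent F2 H)
    (horth : ∀ r s, ipD (H r) (H s) = 0) (i : ℕ) :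
    Function.Injective (toDualZero horth i) := fun _ _ huv =>
  Subtype.ext (hind.fintypeLinearCombination_injective (congrArg (·.1.1) huv))

lemma toDualZero_surjective {d : ℕ} (horth : ∀ r s, ipD (H r) (H s) = 0)
    (hmin : ∀ v ∈ dualDS (CDS H), (¬ ∃ g ∈ rowSpanF2 H, v = (g, 0)) → d ≤ wt v.1 + wt v.2)
    {i : ℕ} (hi : i < d) :
    Function.Surjective (toDualZero horth i) := by
  rintro ⟨w, hw, h1, h2⟩
  by_cases harmless : ∃ g ∈ rowSpanF2 H, w = (g, 0)
  · obtain ⟨g, hg, rfl⟩ := harmless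
    obtain ⟨u, rfl⟩ := mem_rowSpanF2_iff.mp hg
    exact ⟨⟨u, h1⟩, rfl⟩
  · have := hmin w hw harmless
    omega

end DSCode

theorem stmt5_general (n k d : ℕ) (H : Fin (n - k) → Fin n → F4)
    (hind : LinearIndependent F2 H)
    (horth : ∀ r s, ipD (H r) (H s) = 0)
    (hmin : ∀ v ∈ dualDS (CDS H),
      (¬ ∃ g ∈ rowSpanF2 H, v = (g, 0)) → d ≤ wt v.1 + wt v.2) :
    (∀ i, 1 ≤ i → i ≤ d - 1 →
      Bwt (dualDS (CDS H)) i 0 = ∑ j ∈ Finset.range (n - k + 1), Bwt (CDS H) i j)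
    ∧ (∀ i, d ≤ i → i ≤ n →
      (∑ j ∈ Finset.Icc 1 (n - k), Bwt (CDS H) i j) ≤ Bwt (dualDS (CDS H)) i 0)
    ∧ Bwt (CDS H) 0 0 = 1
    ∧ Bwt (dualDS (CDS H)) 0 0 = 1
    ∧ (∀ i, 1 ≤ i → Bwt (CDS H) i 0 = 0) := by
  have hsum : ∀ i, ∑ j ∈ range (n - k + 1), Bwt (CDS H) i j =
      Nat.card {u // wt (Fintype.linearCombination F2 H u) = i} :=
    fun i => (sum_Bwt_range _ i).trans (card_CDS_wt_fst i)
  refine ⟨fun i hi hid => ?_, fun i _ _ => ?_, Bwt_zero_zero zero_mem_CDS,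
    Bwt_zero_zero (zero_mem_dualDS _), fun i hi => Bwt_CDS_eq_zero (by omega)⟩
  · rw [hsum]
    exact (Nat.card_eq_of_bijective _
      ⟨toDualZero_injective hind horth i, toDualZero_surjective horth hmin (by omega)⟩).symm
  · calc ∑ j ∈ Icc 1 (n - k), Bwt (CDS H) i j
        ≤ ∑ j ∈ range (n - k + 1), Bwt (CDS H) i j :=
          sum_le_sum_of_subset fun j hj => by simp at hj ⊢; omega
      _ ≤ Bwt (dualDS (CDS H)) i 0 :=
          hsum i ▸ Nat.card_le_card_of_injective _ (toDualZero_injective hind horth i)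

/-- basic relations between the split weight enumerators of a DS code
of minimum distance `d`. -/
theorem stmt5 (n k d : ℕ) (hk : k ≤ n) (H : Fin (n - k) → Fin n → F4)
    (hind : LinearIndependent F2 H)
    (horth : ∀ r s, ipD (H r) (H s) = 0)
    (hmin : ∀ v ∈ dualDS (CDS H),
      (¬ ∃ g ∈ rowSpanF2 H, v = (g, 0)) → d ≤ wt v.1 + wt v.2) :
    (∀ i, 1 ≤ i → i ≤ d - 1 →
      Bwt (dualDS (CDS H)) i 0 = ∑ j ∈ Finset.range (n - k + 1), Bwt (CDS H) i j)
    ∧ (∀ i, d ≤ i → i ≤ n →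
      (∑ j ∈ Finset.Icc 1 (n - k), Bwt (CDS H) i j) ≤ Bwt (dualDS (CDS H)) i 0)
    ∧ Bwt (CDS H) 0 0 = 1
    ∧ Bwt (dualDS (CDS H)) 0 0 = 1
    ∧ (∀ i, 1 ≤ i → Bwt (CDS H) i 0 = 0) :=
  stmt5_general n k d H hind horth hmin
end
end

section
/- Hamming bound for non-degenerate DS codes: if a non-degenerate DS code with quantum length n, quantum dimension k, and minimum distance d = 2t+1 exists (so that all pairs (e,z) with wt(e) + wt(z) ≤ t have distinct syndromes modulo nothing, i.e., the 2^{n-k} syndromes must distinguish all such error patterns), then Σ_{i=0}^{t} C(n,i) 3^i Σ_{j=0}^{t-i} C(n-k, j) ≤ 2^{n-k}, equivalently 2^{2n} ≤ 4^n 2^{n-k} / Σ_{i=0}^{t} C(n,i) 3^i Σ_{j=0}^{t-i} C(n-k, j). -/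
open Finset

noncomputable section

/-! The syndrome map sends the ball `{(e, z) | wt e + wt z ≤ t}` injectively into `F2^(n-k)`,
so the ball has at most `2^(n-k)` points. Sorting its points by `i = wt e`, there are
`C(n, i) 3^i` data errors of weight `i`, and each pairs with the `∑_{j ≤ t-i} C(n-k, j)`
syndrome errors of weight at most `t - i`. -/

section wt

variable {α : Type*} [DecidableEq α] [Zero α] {N : ℕ}

theorem wt_eq_card (x : Fin N → α) : wt x = #(univ.filter (x · ≠ 0)) := by
  rw [wt, Nat.card_eq_fintype_card, Fintype.card_subtype]

variable [Fintype α]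

theorem filter_support_eq_piFinset (s : Finset (Fin N)) :
    ({x : Fin N → α | univ.filter (x · ≠ 0) = s} : Finset _) =
      Fintype.piFinset fun j => if j ∈ s then univ.erase 0 else {0} := by
  ext x
  simp only [mem_filter, mem_univ, true_and, Fintype.mem_piFinset, Finset.ext_iff]
  refine forall_congr' fun j => ?_
  split_ifs with hj <;> simp [hj]

theorem card_support_eq (s : Finset (Fin N)) :
    #{x : Fin N → α | univ.filter (x · ≠ 0) = s} = (Fintype.card α - 1) ^ #s := by
  rw [filter_support_eq_piFinset, Fintype.card_piFinset]
  simp only [apply_ite Finset.card, card_erase_of_mem (mem_univ _), card_univ, card_singleton]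
  rw [prod_ite_mem, univ_inter, prod_const]

theorem card_wt_eq (i : ℕ) :
    #{x : Fin N → α | wt x = i} = N.choose i * (Fintype.card α - 1) ^ i := by
  rw [card_eq_sum_card_fiberwise (f := fun x : Fin N → α => univ.filter (x · ≠ 0))
    (t := powersetCard i univ) fun x hx => by simpa [wt_eq_card] using hx]
  have fiber : ∀ s ∈ powersetCard i univ,
      #{x ∈ {x : Fin N → α | wt x = i} | univ.filter (x · ≠ 0) = s} =
        (Fintype.card α - 1) ^ i := by
    intro s hs
    rw [mem_powersetCard] at hs
    rw [filter_filter, ← hs.2, ← card_support_eq]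
    congr 1
    refine filter_congr fun x _ => ?_
    rw [wt_eq_card]
    exact ⟨And.right, fun h => ⟨by rw [h], h⟩⟩
  rw [sum_congr rfl fiber, sum_const, card_powersetCard, card_univ, Fintype.card_fin, smul_eq_mul]

theorem card_wt_le (m : ℕ) :
    #{x : Fin N → α | wt x ≤ m} =
      ∑ j ∈ range (m + 1), N.choose j * (Fintype.card α - 1) ^ j := by
  rw [card_eq_sum_card_fiberwise (f := wt) (t := range (m + 1))
    fun x hx => by simpa [Nat.lt_succ_iff] using hx]
  refine sum_congr rfl fun j hj => ?_
  rw [filter_filter, ← card_wt_eq]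
  congr 1
  refine filter_congr fun x _ => ?_
  rw [mem_range] at hj
  omega

end wt

theorem card_filter_add_le {α β : Type*} [Fintype α] [Fintype β] (f : α → ℕ) (g : β → ℕ)
    (t : ℕ) :
    #{p : α × β | f p.1 + g p.2 ≤ t} =
      ∑ i ∈ range (t + 1), #{a | f a = i} * #{b | g b ≤ t - i} := by
  classical
  rw [card_eq_sum_card_fiberwise (f := fun p : α × β => f p.1) (t := range (t + 1))
    fun p hp => by simpa [Nat.lt_succ_iff] using le_of_add_le_left (by simpa using hp)]
  refine sum_congr rfl fun i hi => ?_
  rw [mem_range] at hi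
  rw [← card_product, filter_filter, ← filter_product]
  congr 1
  ext p
  simp only [mem_filter, mem_univ, true_and, mem_product]
  omega

theorem card_F4 : Nat.card F4 = 4 := GaloisField.card 2 2 two_ne_zero

theorem stmt9_general (n k t : ℕ) (H : Fin (n - k) → Fin n → F4)
    (hinj : Set.InjOn
      (fun ez : (Fin n → F4) × (Fin (n - k) → F2) =>
        (fun r => ipD (H r) ez.1 + ez.2 r : Fin (n - k) → F2))
      {ez | wt ez.1 + wt ez.2 ≤ t}) :
    ∑ i ∈ Finset.range (t + 1),
      n.choose i * 3 ^ i * (∑ j ∈ Finset.range (t - i + 1), (n - k).choose j)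
      ≤ 2 ^ (n - k) := by
  classical
  let _ := Fintype.ofFinite F4
  have card_ball : #{ez : (Fin n → F4) × (Fin (n - k) → F2) | wt ez.1 + wt ez.2 ≤ t} =
      ∑ i ∈ range (t + 1),
        n.choose i * 3 ^ i * (∑ j ∈ range (t - i + 1), (n - k).choose j) := by
    simp only [card_filter_add_le, card_wt_eq, card_wt_le, Fintype.card_eq_nat_card, card_F4]
    simp
  rw [← card_ball]
  calc _ ≤ #(univ : Finset (Fin (n - k) → F2)) :=
        card_le_card_of_injOn _ (fun _ _ => mem_univ _) (by simpa using hinj)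
    _ = 2 ^ (n - k) := by simp

/-- Hamming bound for non-degenerate DS codes of minimum distance
`d = 2t+1`: the syndrome map is injective on errors of combined weight `≤ t`,
hence the sphere-packing inequality holds. -/
theorem stmt9 (n k t : ℕ) (hk : k ≤ n) (H : Fin (n - k) → Fin n → F4)
    (hinj : Set.InjOn
      (fun ez : (Fin n → F4) × (Fin (n - k) → F2) =>
        (fun r => ipD (H r) ez.1 + ez.2 r : Fin (n - k) → F2))
      {ez | wt ez.1 + wt ez.2 ≤ t}) :
    ∑ i ∈ Finset.range (t + 1),
      n.choose i * 3 ^ i * (∑ j ∈ Finset.range (t - i + 1), (n - k).choose j)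
      ≤ 2 ^ (n - k) :=
  stmt9_general n k t H hinj
end
end

section
/- Hybrid Hamming bound for non-degenerate DS codes: if a non-degenerate DS code with quantum length n and quantum dimension k can correct every combined error (e,z) with wt(e) ≤ t_D and wt(z) ≤ t_S (all such errors having distinct syndromes in F_2^{n-k}), then Σ_{i=0}^{t_D} Σ_{j=0}^{t_S} C(n,i) 3^i C(n-k, j) ≤ 2^{n-k}. -/
open Finset

noncomputable section

/-!
The syndrome map is injective on the product of the Hamming ball of radius `tD` in `F4^n` and
the Hamming ball of radius `tS` in `F2^(n-k)`, so the product of their sizes, which is the double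
sum, is at most `|F2^(n-k)| = 2^(n-k)`.
-/

section HammingSphere

variable {ι α : Type*} [Fintype ι] [DecidableEq ι] [Fintype α] [Zero α] [DecidableEq α]

theorem card_filter_support_eq (s : Finset ι) :
    #{x : ι → α | ({i | x i ≠ 0} : Finset ι) = s} = (Fintype.card α - 1) ^ #s := by
  have hsupp (x : ι → α) : ({i | x i ≠ 0} : Finset ι) = s ↔ ∀ i, x i ≠ 0 ↔ i ∈ s := by
    simp only [Finset.ext_iff, mem_filter, mem_univ, true_and]
  have hfactor (i : ι) : Fintype.card {a : α // a ≠ 0 ↔ i ∈ s} =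
      if i ∈ s then Fintype.card α - 1 else 1 := by
    by_cases hi : i ∈ s
    · simp only [hi, iff_true, if_true]
      rw [Fintype.card_subtype_compl, Fintype.card_subtype_eq]
    · simp only [hi, iff_false, not_not, if_false]
      exact Fintype.card_subtype_eq 0
  simp_rw [hsupp]
  rw [← Fintype.card_subtype,
    Fintype.card_congr (Equiv.subtypePiEquivPi (p := fun i a => a ≠ 0 ↔ i ∈ s)), Fintype.card_pi]
  simp_rw [hfactor]
  rw [prod_ite_mem, univ_inter, prod_const]

theorem card_filter_hammingNorm_eq (i : ℕ) :
    #{x : ι → α | hammingNorm x = i} = (Fintype.card ι).choose i * (Fintype.card α - 1) ^ i := by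
  rw [card_eq_sum_card_fiberwise (f := fun x : ι → α => ({j | x j ≠ 0} : Finset ι))
    (t := powersetCard i univ) (fun x hx => by simpa [hammingNorm] using hx),
    sum_congr rfl (g := fun _ => (Fintype.card α - 1) ^ i), sum_const, card_powersetCard,
    card_univ, smul_eq_mul]
  intro s hs
  rw [mem_powersetCard_univ] at hs
  rw [← hs, ← card_filter_support_eq, filter_filter]
  congr 1
  ext x
  simp only [mem_filter, mem_univ, true_and, and_iff_right_iff_imp]
  rintro rfl
  rfl

theorem card_filter_hammingNorm_le (t : ℕ) :
    #{x : ι → α | hammingNorm x ≤ t} =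
      ∑ i ∈ range (t + 1), (Fintype.card ι).choose i * (Fintype.card α - 1) ^ i := by
  rw [card_eq_sum_card_fiberwise (f := hammingNorm) (t := range (t + 1))
    (fun x hx => by simpa [Nat.lt_succ_iff] using hx)]
  refine sum_congr rfl fun i hi => ?_
  rw [← card_filter_hammingNorm_eq, filter_filter]
  congr 1
  ext x
  simp only [mem_filter, mem_univ, true_and, and_iff_right_iff_imp]
  rintro rfl
  exact Nat.lt_succ_iff.mp (mem_range.mp hi)

end HammingSphere

theorem wt_eq_hammingNorm {α : Type*} [Zero α] [DecidableEq α] {N : ℕ} (x : Fin N → α) :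
    wt x = hammingNorm x := by
  rw [wt, Nat.card_eq_fintype_card, Fintype.card_subtype, hammingNorm]

theorem card_F4_s10 [Fintype F4] : Fintype.card F4 = 4 := by
  rw [← Nat.card_eq_fintype_card, GaloisField.card 2 2 two_ne_zero]
  rfl

theorem card_filter_wt_le {α : Type*} [Fintype α] [Zero α] [DecidableEq α] (N t : ℕ) :
    #{x : Fin N → α | wt x ≤ t} = ∑ i ∈ range (t + 1), N.choose i * (Fintype.card α - 1) ^ i := by
  simp_rw [wt_eq_hammingNorm]
  rw [card_filter_hammingNorm_le, Fintype.card_fin]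

theorem stmt10_general (n k tD tS : ℕ) (H : Fin (n - k) → Fin n → F4)
    (hinj : Set.InjOn
      (fun ez : (Fin n → F4) × (Fin (n - k) → F2) =>
        (fun r => ipD (H r) ez.1 + ez.2 r : Fin (n - k) → F2))
      {ez | wt ez.1 ≤ tD ∧ wt ez.2 ≤ tS}) :
    ∑ i ∈ Finset.range (tD + 1), ∑ j ∈ Finset.range (tS + 1),
      n.choose i * 3 ^ i * (n - k).choose j ≤ 2 ^ (n - k) := by
  classical
  have : Fintype F4 := Fintype.ofFinite F4
  calc _ = #(({e | wt e ≤ tD} : Finset (Fin n → F4)) ×ˢ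
          ({z | wt z ≤ tS} : Finset (Fin (n - k) → F2))) := by
        rw [card_product, card_filter_wt_le, card_filter_wt_le, card_F4_s10, ZMod.card, sum_mul_sum]
        simp
    _ ≤ Fintype.card (Fin (n - k) → F2) :=
      card_le_card_of_injOn _ (fun _ _ => mem_coe.mpr (mem_univ _))
        (hinj.mono fun ez hez => by simpa using hez)
    _ = 2 ^ (n - k) := by simp

/-- hybrid Hamming bound for non-degenerate DS codes correcting
`t_D` data errors and `t_S` syndrome errors. -/
theorem stmt10 (n k tD tS : ℕ) (hk : k ≤ n) (H : Fin (n - k) → Fin n → F4)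
    (hinj : Set.InjOn
      (fun ez : (Fin n → F4) × (Fin (n - k) → F2) =>
        (fun r => ipD (H r) ez.1 + ez.2 r : Fin (n - k) → F2))
      {ez | wt ez.1 ≤ tD ∧ wt ez.2 ≤ tS}) :
    ∑ i ∈ Finset.range (tD + 1), ∑ j ∈ Finset.range (tS + 1),
      n.choose i * 3 ^ i * (n - k).choose j ≤ 2 ^ (n - k) :=
  stmt10_general n k tD tS H hinj
end
end
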